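/- arXiv:math/0111115 — 4 statements merged into one kernel-verified Lean document; each statement's English description precedes it below -/
import Mathlib

section
/- Let θ, φ : ℝ → ℝ be continuous and a, b : ℝ → ℝ continuous with a(x) > 0 for all x, and suppose that sin(θ(x))·cos(φ(x)) = (a(x)·sin(φ(x)) + b(x)·cos(φ(x)))·cos(θ(x)) for all x ∈ ℝ (a continuous version of the relation tan θ = a·tan φ + b). Then: (i) for every x, cos(θ(x)) = 0 if and only if cos(φ(x)) = 0 (θ and φ take values in (ℤ + 1/2)π at exactly the same points); (ii) the difference θ − φ is globally bounded: there is M > 0 with |θ(x) − φ(x)| ≤ M for all x ∈ ℝ. -/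
/-!
The relation says that the unit vector `(cos θ, sin θ)` is parallel to `w = L (cos φ, sin φ)`,
where `L = !![1, 0; b, a]` has determinant `a > 0`. Hence `w ≠ 0`, the inner product `E` of the
two vectors never vanishes, and by continuity it has constant sign. Wherever `θ - φ ∈ πℤ`, the
vector `(cos φ, sin φ)` is an eigenvector of `L`, whose eigenvalues `1` and `a` are positive, so
`E · cos (θ - φ) > 0` there. Thus the continuous function `θ - φ` never meets one of the cosets
`2πℤ`, `π + 2πℤ`, and so stays in an open interval of length `2π`.
-/

open Real

theorem Continuous.forall_pos_or_forall_neg {X : Type*} [TopologicalSpace X] [PreconnectedSpace X]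
    {f : X → ℝ} (hf : Continuous f) (h : ∀ x, f x ≠ 0) : (∀ x, 0 < f x) ∨ ∀ x, f x < 0 := by
  by_contra! ⟨⟨x, hx⟩, y, hy⟩
  obtain ⟨z, hz⟩ := intermediate_value_univ x y hf ⟨hx, hy⟩
  exact h z hz

theorem Continuous.abs_sub_lt_of_forall_ne_add_int_mul {X : Type*} [TopologicalSpace X]
    [PreconnectedSpace X] {g : X → ℝ} (hg : Continuous g) {p t₀ : ℝ} (hp : 0 < p)
    (h : ∀ x (k : ℤ), g x ≠ t₀ + k * p) (x y : X) : |g x - g y| < p := by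
  wlog hyx : g y ≤ g x generalizing x y
  · rw [abs_sub_comm]; exact this y x (by linarith)
  by_contra! hle
  rw [abs_of_nonneg (sub_nonneg.2 hyx)] at hle
  obtain ⟨hlo, hhi⟩ := toIcoMod_mem_Ico hp (g y) t₀
  obtain ⟨z, hz⟩ := intermediate_value_univ y x hg ⟨hlo, by linarith⟩
  refine h z (-toIcoDiv hp (g y) t₀) ?_
  rw [hz, ← self_sub_toIcoDiv_zsmul, zsmul_eq_mul, Int.cast_neg]
  ring

namespace Kepler

/-- `(cos φ, A sin φ + B cos φ)` is the image of `(cos φ, sin φ)` under `!![1, 0; B, A]`; the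
Kepler relation says that it is parallel to `(cos θ, sin θ)`. -/
noncomputable def pairing (θ φ A B : ℝ) : ℝ := cos θ * cos φ + sin θ * (A * sin φ + B * cos φ)

variable {θ φ A B : ℝ}

theorem cos_eq_zero_iff (hA : 0 < A)
    (h : sin θ * cos φ = (A * sin φ + B * cos φ) * cos θ) : cos θ = 0 ↔ cos φ = 0 := by
  constructor
  · intro hc
    have hs : sin θ ≠ 0 := fun hs ↦ by simpa [hs, hc] using sin_sq_add_cos_sq θ
    rw [hc, mul_zero] at h
    exact (mul_eq_zero.1 h).resolve_left hs
  · intro hC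
    have hS : sin φ ≠ 0 := fun hS ↦ by simpa [hS, hC] using sin_sq_add_cos_sq φ
    rw [hC] at h
    simpa [hA.ne', hS] using h.symm

/-- Lagrange's identity for two parallel vectors, the first a unit vector. -/
theorem pairing_sq (h : sin θ * cos φ = (A * sin φ + B * cos φ) * cos θ) :
    pairing θ φ A B ^ 2 = cos φ ^ 2 + (A * sin φ + B * cos φ) ^ 2 := by
  unfold pairing
  linear_combination (cos φ ^ 2 + (A * sin φ + B * cos φ) ^ 2) * sin_sq_add_cos_sq θ
    - (sin θ * cos φ - (A * sin φ + B * cos φ) * cos θ) * h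

theorem pairing_ne_zero (hA : 0 < A) (h : sin θ * cos φ = (A * sin φ + B * cos φ) * cos θ) :
    pairing θ φ A B ≠ 0 := by
  intro hE
  have h0 := pairing_sq h
  rw [hE] at h0
  have hC : cos φ = 0 := by nlinarith [sq_nonneg (A * sin φ + B * cos φ)]
  have hS : sin φ = 0 := by rw [hC] at h0; simpa [hA.ne'] using h0.symm
  simpa [hS, hC] using sin_sq_add_cos_sq φ

/-- A unit eigenvector `(C, S)` of `!![1, 0; B, A]` has a positive eigenvalue, `1` or `A`. -/
theorem eigenvalue_pos {S C : ℝ} (hA : 0 < A) (hSC : S ^ 2 + C ^ 2 = 1)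
    (heig : S * C = (A * S + B * C) * C) : 0 < C ^ 2 + S * (A * S + B * C) := by
  rcases eq_or_ne C 0 with hC | hC
  · subst hC
    nlinarith
  · have : A * S + B * C = S := (mul_right_cancel₀ hC heig).symm
    rw [this]
    linarith

theorem pairing_mul_cos_sub_pos (hA : 0 < A)
    (h : sin θ * cos φ = (A * sin φ + B * cos φ) * cos θ) (hs : sin (θ - φ) = 0) :
    0 < pairing θ φ A B * cos (θ - φ) := by
  rw [sin_sub] at hs
  rw [cos_sub]
  set D := cos θ * cos φ + sin θ * sin φ
  have hc : cos θ = D * cos φ := by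
    linear_combination (-sin φ) * hs - cos θ * sin_sq_add_cos_sq φ
  have hs' : sin θ = D * sin φ := by
    linear_combination cos φ * hs - sin θ * sin_sq_add_cos_sq φ
  have hD : D ^ 2 = 1 := by
    linear_combination sin_sq_add_cos_sq θ - cos θ * hc - sin θ * hs'
  have heig : sin φ * cos φ = (A * sin φ + B * cos φ) * cos φ := by
    linear_combination D * h - (sin φ * cos φ - (A * sin φ + B * cos φ) * cos φ) * hD
      - D * cos φ * hs' + D * (A * sin φ + B * cos φ) * hc
  calc 0 < cos φ ^ 2 + sin φ * (A * sin φ + B * cos φ) :=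
        eigenvalue_pos hA (sin_sq_add_cos_sq φ) heig
    _ = pairing θ φ A B * D := by
      unfold pairing
      linear_combination -(cos φ ^ 2 + sin φ * (A * sin φ + B * cos φ)) * hD
        - D * cos φ * hc - D * (A * sin φ + B * cos φ) * hs'

end Kepler

open Kepler in
/-- **Modified Kepler transformation.**  If continuous `θ, φ` satisfy
`sin θ · cos φ = (a·sin φ + b·cos φ)·cos θ` with continuous `a > 0` and continuous `b`
(a pole-free version of `tan θ = a·tan φ + b`), then `cos θ` and `cos φ` vanish at
exactly the same points, and `θ − φ` is globally bounded. -/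
theorem modified_kepler_transformation
    (θ φ a b : ℝ → ℝ)
    (hθ : Continuous θ) (hφ : Continuous φ)
    (ha : Continuous a) (hb : Continuous b)
    (hapos : ∀ x : ℝ, 0 < a x)
    (h : ∀ x : ℝ, Real.sin (θ x) * Real.cos (φ x) =
      (a x * Real.sin (φ x) + b x * Real.cos (φ x)) * Real.cos (θ x)) :
    (∀ x : ℝ, Real.cos (θ x) = 0 ↔ Real.cos (φ x) = 0) ∧
    ∃ M > 0, ∀ x : ℝ, |θ x - φ x| ≤ M := by
  refine ⟨fun x ↦ cos_eq_zero_iff (hapos x) (h x), ?_⟩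
  set E := fun x ↦ pairing (θ x) (φ x) (a x) (b x)
  have hE : Continuous E := by unfold E pairing; fun_prop
  -- `θ - φ` avoids `π + 2πℤ` where `E > 0` and `2πℤ` where `E < 0`.
  obtain ⟨t₀, hsin, hcos⟩ : ∃ t₀, sin t₀ = 0 ∧ ∀ x, E x * cos t₀ < 0 := by
    rcases hE.forall_pos_or_forall_neg fun x ↦ pairing_ne_zero (hapos x) (h x) with hpos | hneg
    · exact ⟨π, sin_pi, fun x ↦ by simpa using hpos x⟩
    · exact ⟨0, sin_zero, fun x ↦ by simpa using hneg x⟩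
  have havoid : ∀ x (k : ℤ), θ x - φ x ≠ t₀ + k * (2 * π) := fun x k hx ↦ by
    have := pairing_mul_cos_sub_pos (hapos x) (h x)
      (by rw [hx, sin_add_int_mul_two_pi, hsin])
    rw [hx, cos_add_int_mul_two_pi] at this
    exact (hcos x).not_gt this
  refine ⟨|θ 0 - φ 0| + 2 * π, by positivity, fun x ↦ ?_⟩
  have := (hθ.sub hφ).abs_sub_lt_of_forall_ne_add_int_mul two_pi_pos havoid x 0
  simp only [Pi.sub_apply] at this
  linarith [abs_sub_abs_le_abs_sub (θ x - φ x) (θ 0 - φ 0)]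
end

section
/- Let ρ̂ > 0 and C > 0, and let l : (0, ρ̂] → ℝ be locally absolutely continuous with l(ρ) > 0 for all ρ ∈ (0, ρ̂] and |l'(ρ)| ≤ C·l(ρ)² for almost every ρ ∈ (0, ρ̂]. Then for every ρ ∈ (0, ρ̂], l(ρ) ≤ l(ρ̂)·exp(C·∫_ρ^ρ̂ l(t) dt). -/
/-!
Integrating `l' ≥ -C l²` from `ρ` to `ρ̂` gives the integral inequality
`l ρ ≤ l ρ̂ + ∫_ρ^ρ̂ (C l) · l`, and the integral form of Grönwall's inequality
(run backwards from `ρ̂`, with the nonnegative kernel `C l`) turns it into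
`l ρ ≤ l ρ̂ · exp (∫_ρ^ρ̂ C l)`.
-/

noncomputable section
open MeasureTheory Set

/-- `l` is locally absolutely continuous on `(0, ρ̂]` with almost-everywhere
derivative `l'`: on every compact subinterval `[a, b] ⊆ (0, ρ̂]` the derivative `l'`
is integrable and the fundamental theorem of calculus `l b − l a = ∫_a^b l'` holds. -/
def LocAbsolutelyContinuousOnIoc (l l' : ℝ → ℝ) (ρmax : ℝ) : Prop :=
  (∀ a ∈ Set.Ioc (0:ℝ) ρmax, IntegrableOn l' (Set.Icc a ρmax) volume) ∧
    ∀ a ∈ Set.Ioc (0:ℝ) ρmax, ∀ b ∈ Set.Ioc (0:ℝ) ρmax,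
      l b = l a + ∫ t in a..b, l' t

open Real Topology intervalIntegral

section IntegralLeft

variable {f : ℝ → ℝ} {a b : ℝ}

theorem ContinuousOn.continuousOn_integral_left (hf : ContinuousOn f (Icc a b)) (hab : a ≤ b) :
    ContinuousOn (fun y => ∫ t in y..b, f t) (Icc a b) := by
  have := continuousOn_primitive_interval_left (μ := volume)
    (by rw [uIcc_of_le hab]; exact hf.integrableOn_Icc)
  rwa [uIcc_of_le hab] at this

theorem ContinuousOn.hasDerivAt_integral_left (hf : ContinuousOn f (Icc a b)) {x : ℝ}
    (hx : x ∈ Ioo a b) : HasDerivAt (fun y => ∫ t in y..b, f t) (-f x) x := by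
  have hnhds : Icc a b ∈ 𝓝 x := Icc_mem_nhds hx.1 hx.2
  exact integral_hasDerivAt_left
    ((hf.mono (Icc_subset_Icc_left hx.1.le)).intervalIntegrable_of_Icc hx.2.le)
    ⟨_, hnhds, hf.aestronglyMeasurable measurableSet_Icc⟩ (hf.continuousAt hnhds)

end IntegralLeft

theorem le_mul_exp_integral_of_le_add_integral {u k : ℝ → ℝ} {a b K : ℝ} (hab : a ≤ b)
    (hu : ContinuousOn u (Icc a b)) (hk : ContinuousOn k (Icc a b))
    (hk_nonneg : ∀ x ∈ Icc a b, 0 ≤ k x)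
    (h : ∀ x ∈ Icc a b, u x ≤ K + ∫ t in x..b, k t * u t) :
    u a ≤ K * exp (∫ t in a..b, k t) := by
  set P := fun y => ∫ t in y..b, k t * u t
  set Q := fun y => ∫ t in y..b, k t
  -- `(K + P) e^{-Q}` has derivative `k e^{-Q} (K + P - u) ≥ 0`.
  have hmono : MonotoneOn (fun y => (K + P y) * exp (-Q y)) (Icc a b) := by
    refine monotoneOn_of_hasDerivWithinAt_nonneg (f' := fun x => k x * exp (-Q x) * (K + P x - u x))
      (convex_Icc a b)
      (((hk.mul hu).continuousOn_integral_left hab).const_add K |>.mul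
        (hk.continuousOn_integral_left hab).neg.rexp) (fun x hx => ?_) (fun x hx => ?_)
    all_goals rw [interior_Icc] at hx
    · have hP := (hk.mul hu).hasDerivAt_integral_left hx
      have hQ := hk.hasDerivAt_integral_left hx
      refine ((hP.const_add K).mul hQ.neg.exp).hasDerivWithinAt.congr_deriv ?_
      simp only [Pi.mul_apply, Pi.neg_apply]
      ring
    · exact mul_nonneg (mul_nonneg (hk_nonneg x (Ioo_subset_Icc_self hx)) (exp_pos _).le)
        (sub_nonneg.2 (h x (Ioo_subset_Icc_self hx)))
  have hΦ : (K + P a) * exp (-Q a) ≤ K := by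
    simpa [P, Q] using hmono (left_mem_Icc.2 hab) (right_mem_Icc.2 hab) hab
  calc u a ≤ K + P a := h a (left_mem_Icc.2 hab)
    _ = (K + P a) * exp (-Q a) * exp (Q a) := by
      rw [mul_assoc, ← exp_add, neg_add_cancel, exp_zero, mul_one]
    _ ≤ K * exp (Q a) := by gcongr

namespace LocAbsolutelyContinuousOnIoc

variable {l l' : ℝ → ℝ} {ρmax a : ℝ}

theorem continuousOn_Icc (hac : LocAbsolutelyContinuousOnIoc l l' ρmax) (ha : a ∈ Ioc 0 ρmax) :
    ContinuousOn l (Icc a ρmax) := by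
  have hprim := continuousOn_primitive_interval (μ := volume) (f := l')
    (by rw [uIcc_of_le ha.2]; exact hac.1 a ha)
  rw [uIcc_of_le ha.2] at hprim
  exact (continuousOn_const.add hprim).congr fun x hx =>
    hac.2 a ha x ⟨ha.1.trans_le hx.1, hx.2⟩

theorem le_add_integral (hac : LocAbsolutelyContinuousOnIoc l l' ρmax) {g : ℝ → ℝ}
    (hg : ∀ᵐ t ∂volume.restrict (Ioc 0 ρmax), -g t ≤ l' t)
    (hg_int : IntervalIntegrable g volume a ρmax) (ha : a ∈ Ioc 0 ρmax) :
    l a ≤ l ρmax + ∫ t in a..ρmax, g t := by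
  have hl' : IntervalIntegrable l' volume a ρmax :=
    (intervalIntegrable_iff_integrableOn_Icc_of_le ha.2).2 (hac.1 a ha)
  have hmono : ∫ t in a..ρmax, -g t ≤ ∫ t in a..ρmax, l' t :=
    integral_mono_ae_restrict ha.2 hg_int.neg hl' <|
      ae_restrict_of_ae_restrict_of_subset (Icc_subset_Ioc_iff ha.2 |>.2 ⟨ha.1, le_rfl⟩) hg
  rw [intervalIntegral.integral_neg] at hmono
  linarith [hac.2 a ha ρmax ⟨ha.1.trans_le ha.2, le_rfl⟩]

end LocAbsolutelyContinuousOnIoc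

theorem slow_decay_upper_bound_general
    (ρmax C : ℝ) (hC : 0 < C)
    (l l' : ℝ → ℝ)
    (hpos : ∀ ρ ∈ Set.Ioc (0:ℝ) ρmax, 0 < l ρ)
    (hac : LocAbsolutelyContinuousOnIoc l l' ρmax)
    (hbound : ∀ᵐ ρ ∂(volume.restrict (Set.Ioc (0:ℝ) ρmax)), |l' ρ| ≤ C * (l ρ) ^ 2) :
    ∀ ρ ∈ Set.Ioc (0:ℝ) ρmax,
      l ρ ≤ l ρmax * Real.exp (C * ∫ t in ρ..ρmax, l t) := by
  intro ρ hρ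
  have hsub : Icc ρ ρmax ⊆ Ioc 0 ρmax := fun x hx => ⟨hρ.1.trans_le hx.1, hx.2⟩
  have hl := hac.continuousOn_Icc hρ
  have hlower : ∀ᵐ t ∂volume.restrict (Ioc 0 ρmax), -(C * l t * l t) ≤ l' t :=
    hbound.mono fun t ht => by nlinarith [neg_abs_le (l' t)]
  have hintegral : ∀ x ∈ Icc ρ ρmax, l x ≤ l ρmax + ∫ t in x..ρmax, C * l t * l t :=
    fun x hx => hac.le_add_integral hlower
      (((continuousOn_const.mul hl).mul hl).mono (Icc_subset_Icc_left hx.1)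
        |>.intervalIntegrable_of_Icc hx.2) (hsub hx)
  simpa only [intervalIntegral.integral_const_mul] using
    le_mul_exp_integral_of_le_add_integral (k := fun t => C * l t) hρ.2 hl
      (continuousOn_const.mul hl) (fun x hx => mul_nonneg hC.le (hpos x (hsub hx)).le) hintegral

/-- If `l > 0` is locally absolutely continuous on `(0, ρ̂]` with
`|l'| ≤ C·l²` a.e., then `l(ρ) ≤ l(ρ̂)·exp(C·∫_ρ^ρ̂ l)` for all `ρ ∈ (0, ρ̂]`. -/
theorem slow_decay_upper_bound
    (ρmax C : ℝ) (hρ : 0 < ρmax) (hC : 0 < C)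
    (l l' : ℝ → ℝ)
    (hpos : ∀ ρ ∈ Set.Ioc (0:ℝ) ρmax, 0 < l ρ)
    (hac : LocAbsolutelyContinuousOnIoc l l' ρmax)
    (hbound : ∀ᵐ ρ ∂(volume.restrict (Set.Ioc (0:ℝ) ρmax)), |l' ρ| ≤ C * (l ρ) ^ 2) :
    ∀ ρ ∈ Set.Ioc (0:ℝ) ρmax,
      l ρ ≤ l ρmax * Real.exp (C * ∫ t in ρ..ρmax, l t) :=
  slow_decay_upper_bound_general ρmax C hC l l' hpos hac hbound
end
end

section
/- Let m ≥ 0, let l : (0, ∞) → ℝ be continuously differentiable, and let u : ℝ → ℂ² be continuously differentiable with compact support contained in (0, ∞). Then ∫_0^∞ ‖−iσ₂·u'(r) + m·σ₃·u(r) + l(r)·σ₁·u(r)‖² dr ≥ ∫_0^∞ (l(r)² − |l'(r)|)·‖u(r)‖² dr, where ‖·‖ is the Euclidean norm on ℂ². -/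
noncomputable section
open MeasureTheory Set ComplexConjugate

private lemma dirac_key_identity (m a : ℝ) (z₁ z₂ w₁ w₂ : ℂ) :
    ‖w₂ + (m:ℂ)*z₁ + (a:ℂ)*z₂‖^2 + ‖-w₁ - (m:ℂ)*z₂ + (a:ℂ)*z₁‖^2
    = ‖w₁‖^2 + ‖w₂‖^2 + m^2*(‖z₁‖^2+‖z₂‖^2) + a^2*(‖z₁‖^2+‖z₂‖^2)
      + m * (2 * (w₂ * conj z₁ + z₂ * conj w₁).re)
      + a * ((w₂*conj z₂ + z₂*conj w₂ - (w₁*conj z₁ + z₁*conj w₁)).re) := by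
  simp only [Complex.sq_norm, Complex.normSq_apply, Complex.add_re,
    Complex.add_im, Complex.mul_re, Complex.mul_im, Complex.sub_re, Complex.sub_im,
    Complex.neg_re, Complex.neg_im, Complex.conj_re, Complex.conj_im,
    Complex.ofReal_re, Complex.ofReal_im]
  ring

/-- **Quadratic-form lower bound for the perturbed Dirac expression.**
For `u = (u₁,u₂)` continuously differentiable with compact support in `(0, ∞)`,
`m ≥ 0`, and `l` continuously differentiable on `(0, ∞)`, with
`τu = −iσ₂u' + mσ₃u + lσ₁u`, one has `∫‖τu‖² ≥ ∫(l² − |l'|)·‖u‖²`. -/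
theorem dirac_quadratic_form_lower_bound
    (m : ℝ) (hm : 0 ≤ m) (l : ℝ → ℝ) (hl : ContDiffOn ℝ 1 l (Set.Ioi 0))
    (u₁ u₂ : ℝ → ℂ) (hu₁ : ContDiff ℝ 1 u₁) (hu₂ : ContDiff ℝ 1 u₂)
    (hc₁ : HasCompactSupport u₁) (hc₂ : HasCompactSupport u₂)
    (hs₁ : tsupport u₁ ⊆ Set.Ioi 0) (hs₂ : tsupport u₂ ⊆ Set.Ioi 0) :
    ∫ r in Set.Ioi (0:ℝ),
        ((l r) ^ 2 - |deriv l r|) * (‖u₁ r‖ ^ 2 + ‖u₂ r‖ ^ 2)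
      ≤ ∫ r in Set.Ioi (0:ℝ),
        (‖deriv u₂ r + (m : ℂ) * u₁ r + (l r : ℂ) * u₂ r‖ ^ 2 +
         ‖-(deriv u₁ r) - (m : ℂ) * u₂ r + (l r : ℂ) * u₁ r‖ ^ 2) := by
  have hK : IsCompact (tsupport u₁ ∪ tsupport u₂) :=
    hc₁.union hc₂
  set K : Set ℝ := tsupport u₁ ∪ tsupport u₂ with hKdef
  have hKs : K ⊆ Ioi 0 := union_subset hs₁ hs₂
  have hKcl : IsClosed K := (isClosed_tsupport u₁).union (isClosed_tsupport u₂)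
  -- vanishing off K
  have hz₁ : ∀ r ∉ K, u₁ r = 0 := fun r hr =>
    image_eq_zero_of_notMem_tsupport (fun h => hr (Or.inl h))
  have hz₂ : ∀ r ∉ K, u₂ r = 0 := fun r hr =>
    image_eq_zero_of_notMem_tsupport (fun h => hr (Or.inr h))
  have hzd₁ : ∀ r ∉ K, deriv u₁ r = 0 := by
    intro r hr
    have : r ∉ tsupport u₁ := fun h => hr (Or.inl h)
    rw [notMem_tsupport_iff_eventuallyEq] at this
    exact this.deriv_eq.trans (deriv_const r 0)
  have hzd₂ : ∀ r ∉ K, deriv u₂ r = 0 := by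
    intro r hr
    have : r ∉ tsupport u₂ := fun h => hr (Or.inr h)
    rw [notMem_tsupport_iff_eventuallyEq] at this
    exact this.deriv_eq.trans (deriv_const r 0)
  have h0K : (0:ℝ) ∉ K := fun h => lt_irrefl 0 (mem_Ioi.mp (hKs h))
  -- derivative facts for u
  have hu₁d : ∀ r, HasDerivAt u₁ (deriv u₁ r) r :=
    fun r => (hu₁.differentiable one_ne_zero r).hasDerivAt
  have hu₂d : ∀ r, HasDerivAt u₂ (deriv u₂ r) r :=
    fun r => (hu₂.differentiable one_ne_zero r).hasDerivAt
  have hcu₁ : Continuous u₁ := hu₁.continuous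
  have hcu₂ : Continuous u₂ := hu₂.continuous
  have hcd₁ : Continuous (deriv u₁) := hu₁.continuous_deriv le_rfl
  have hcd₂ : Continuous (deriv u₂) := hu₂.continuous_deriv le_rfl
  -- l facts on Ioi 0
  have hld : ∀ r ∈ Ioi (0:ℝ), HasDerivAt l (deriv l r) r := fun r hr =>
    (((hl.differentiableOn one_ne_zero).differentiableAt (isOpen_Ioi.mem_nhds hr))).hasDerivAt
  have hlc : ContinuousOn l (Ioi 0) := hl.continuousOn
  have hldc : ContinuousOn (deriv l) (Ioi 0) :=
    hl.continuousOn_deriv_of_isOpen isOpen_Ioi le_rfl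
  -- the auxiliary functions
  set C : ℝ → ℝ := fun r => 2 * (u₂ r * conj (u₁ r)).re with hCdef
  set Cd : ℝ → ℝ :=
    fun r => 2 * (deriv u₂ r * conj (u₁ r) + u₂ r * conj (deriv u₁ r)).re with hCddef
  set D : ℝ → ℝ := fun r => (u₂ r * conj (u₂ r) - u₁ r * conj (u₁ r)).re with hDdef
  set Dd : ℝ → ℝ := fun r =>
    ((deriv u₂ r * conj (u₂ r) + u₂ r * conj (deriv u₂ r))
      - (deriv u₁ r * conj (u₁ r) + u₁ r * conj (deriv u₁ r))).re with hDddef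
  set g : ℝ → ℝ := fun r => l r * D r with hgdef
  set gd : ℝ → ℝ := fun r => deriv l r * D r + l r * Dd r with hgddef
  -- HasDerivAt for C and D
  have hCd : ∀ r, HasDerivAt C (Cd r) r := by
    intro r
    have h1 : HasDerivAt (fun x => u₂ x * conj (u₁ x))
        (deriv u₂ r * conj (u₁ r) + u₂ r * conj (deriv u₁ r)) r := by
      simpa [Complex.star_def, Pi.mul_def] using (hu₂d r).mul (hu₁d r).star
    have h2 := Complex.reCLM.hasFDerivAt.comp_hasDerivAt r h1
    simpa [hCdef, hCddef] using h2.const_mul (2:ℝ)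
  have hDd : ∀ r, HasDerivAt D (Dd r) r := by
    intro r
    have h1 : HasDerivAt (fun x => u₂ x * conj (u₂ x) - u₁ x * conj (u₁ x))
        ((deriv u₂ r * conj (u₂ r) + u₂ r * conj (deriv u₂ r))
          - (deriv u₁ r * conj (u₁ r) + u₁ r * conj (deriv u₁ r))) r := by
      simpa [Complex.star_def, Pi.mul_def, Pi.sub_def] using
        (((hu₂d r).mul (hu₂d r).star).sub ((hu₁d r).mul (hu₁d r).star))
    exact Complex.reCLM.hasFDerivAt.comp_hasDerivAt r h1
  -- HasDerivAt for g
  have hDzero : ∀ r ∉ K, D r = 0 := by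
    intro r hr; simp [hDdef, hz₁ r hr, hz₂ r hr]
  have hDdzero : ∀ r ∉ K, Dd r = 0 := by
    intro r hr; simp [hDddef, hz₁ r hr, hz₂ r hr, hzd₁ r hr, hzd₂ r hr]
  have hgd : ∀ r, HasDerivAt g (gd r) r := by
    intro r
    by_cases hr : r ∈ Ioi (0:ℝ)
    · exact (hld r hr).mul (hDd r)
    · have hrK : r ∉ K := fun h => hr (hKs h)
      have hgz : ∀ x ∈ Kᶜ, g x = 0 := by
        intro x hx; simp [hgdef, hDzero x hx]
      have hev : g =ᶠ[nhds r] fun _ => (0:ℝ) :=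
        Filter.eventually_of_mem (hKcl.isOpen_compl.mem_nhds hrK) hgz
      have h0 : HasDerivAt g 0 r := (hasDerivAt_const r (0:ℝ)).congr_of_eventuallyEq hev
      have : gd r = 0 := by simp [hgddef, hDzero r hrK, hDdzero r hrK]
      rw [this]; exact h0
  -- continuity helper
  have cont2 : ∀ f : ℝ → ℝ, ContinuousOn f (Ioi 0) → (∀ r ∉ K, f r = 0) → Continuous f := by
    intro f hf h0
    rw [continuous_iff_continuousAt]
    intro r
    by_cases hr : r ∈ Ioi (0:ℝ)
    · exact hf.continuousAt (isOpen_Ioi.mem_nhds hr)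
    · have hrK : r ∉ K := fun h => hr (hKs h)
      have hev : f =ᶠ[nhds r] fun _ => (0:ℝ) :=
        Filter.eventually_of_mem (hKcl.isOpen_compl.mem_nhds hrK) h0
      exact continuousAt_const.congr hev.symm
  -- C : C¹ with compact support
  have hCdcont : Continuous Cd := by
    apply continuous_const.mul
    exact Complex.continuous_re.comp
      ((hcd₂.mul (Complex.continuous_conj.comp hcu₁)).add
        (hcu₂.mul (Complex.continuous_conj.comp hcd₁)))
  have hC1 : ContDiff ℝ 1 C := by
    refine contDiff_one_iff_deriv.mpr ⟨fun r => (hCd r).differentiableAt, ?_⟩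
    have : deriv C = Cd := funext fun r => (hCd r).deriv
    rw [this]; exact hCdcont
  have hCsupp : HasCompactSupport C := by
    apply HasCompactSupport.intro hK
    intro x hx; simp [hCdef, hz₁ x hx]
  have hCint0 : ∫ r in Ioi (0:ℝ), Cd r = 0 := by
    have h := HasCompactSupport.integral_Ioi_deriv_eq hC1 hCsupp 0
    have hd : deriv C = Cd := funext fun r => (hCd r).deriv
    rw [hd] at h
    rw [h]
    simp [hCdef, hz₂ 0 h0K]
  -- g : C¹ with compact support
  have hgdcont : Continuous gd := by
    apply cont2
    · apply ContinuousOn.add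
      · exact hldc.mul (Complex.continuous_re.comp
          ((hcu₂.mul (Complex.continuous_conj.comp hcu₂)).sub
            (hcu₁.mul (Complex.continuous_conj.comp hcu₁)))).continuousOn
      · apply hlc.mul
        exact (Complex.continuous_re.comp
          (((hcd₂.mul (Complex.continuous_conj.comp hcu₂)).add
            (hcu₂.mul (Complex.continuous_conj.comp hcd₂))).sub
           ((hcd₁.mul (Complex.continuous_conj.comp hcu₁)).add
            (hcu₁.mul (Complex.continuous_conj.comp hcd₁))))).continuousOn
    · intro r hr; simp [hgddef, hDzero r hr, hDdzero r hr]
  have hg1 : ContDiff ℝ 1 g := by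
    refine contDiff_one_iff_deriv.mpr ⟨fun r => (hgd r).differentiableAt, ?_⟩
    have : deriv g = gd := funext fun r => (hgd r).deriv
    rw [this]; exact hgdcont
  have hgsupp : HasCompactSupport g := by
    apply HasCompactSupport.intro hK
    intro x hx; simp [hgdef, hDzero x hx]
  have hgint0 : ∫ r in Ioi (0:ℝ), gd r = 0 := by
    have h := HasCompactSupport.integral_Ioi_deriv_eq hg1 hgsupp 0
    have hd : deriv g = gd := funext fun r => (hgd r).deriv
    rw [hd] at h
    rw [h]
    simp [hgdef, hDzero 0 h0K]
  -- integrands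
  set F : ℝ → ℝ := fun r =>
      (‖deriv u₂ r + (m : ℂ) * u₁ r + (l r : ℂ) * u₂ r‖ ^ 2 +
       ‖-(deriv u₁ r) - (m : ℂ) * u₂ r + (l r : ℂ) * u₁ r‖ ^ 2) with hFdef
  set G : ℝ → ℝ := fun r =>
      ((l r) ^ 2 - |deriv l r|) * (‖u₁ r‖ ^ 2 + ‖u₂ r‖ ^ 2) with hGdef
  -- continuity and integrability
  have hGcont : Continuous G := by
    apply cont2
    · exact ((hlc.pow 2).sub hldc.abs).mul
        ((hcu₁.norm.pow 2).add (hcu₂.norm.pow 2)).continuousOn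
    · intro r hr; simp [hGdef, hz₁ r hr, hz₂ r hr]
  have hFcont : Continuous F := by
    apply cont2
    · apply ContinuousOn.add
      · apply ContinuousOn.pow
        apply ContinuousOn.norm
        exact ((hcd₂.continuousOn.add (continuous_const.mul hcu₁).continuousOn).add
          ((Complex.continuous_ofReal.comp_continuousOn hlc).mul hcu₂.continuousOn))
      · apply ContinuousOn.pow
        apply ContinuousOn.norm
        exact ((hcd₁.neg.continuousOn.sub (continuous_const.mul hcu₂).continuousOn).add
          ((Complex.continuous_ofReal.comp_continuousOn hlc).mul hcu₁.continuousOn))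
    · intro r hr
      simp [hFdef, hz₁ r hr, hz₂ r hr, hzd₁ r hr, hzd₂ r hr]
  have hGsupp : HasCompactSupport G := by
    apply HasCompactSupport.intro hK
    intro x hx; simp [hGdef, hz₁ x hx, hz₂ x hx]
  have hFsupp : HasCompactSupport F := by
    apply HasCompactSupport.intro hK
    intro x hx; simp [hFdef, hz₁ x hx, hz₂ x hx, hzd₁ x hx, hzd₂ x hx]
  have hCdsupp : HasCompactSupport Cd := by
    apply HasCompactSupport.intro hK
    intro x hx; simp [hCddef, hz₁ x hx, hz₂ x hx]
  have hgdsupp : HasCompactSupport gd := by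
    apply HasCompactSupport.intro hK
    intro x hx; simp [hgddef, hDzero x hx, hDdzero x hx]
  have hGint : IntegrableOn G (Ioi 0) volume :=
    (hGcont.integrable_of_hasCompactSupport hGsupp).integrableOn
  have hFint : IntegrableOn F (Ioi 0) volume :=
    (hFcont.integrable_of_hasCompactSupport hFsupp).integrableOn
  have hCdint : IntegrableOn Cd (Ioi 0) volume :=
    (hCdcont.integrable_of_hasCompactSupport hCdsupp).integrableOn
  have hgdint : IntegrableOn gd (Ioi 0) volume :=
    (hgdcont.integrable_of_hasCompactSupport hgdsupp).integrableOn
  -- pointwise inequality on Ioi 0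
  have hpt : ∀ r ∈ Ioi (0:ℝ), G r ≤ F r - m * Cd r - gd r := by
    intro r hr
    have hFr : F r = ‖deriv u₁ r‖^2 + ‖deriv u₂ r‖^2
        + m^2*(‖u₁ r‖^2+‖u₂ r‖^2) + (l r)^2*(‖u₁ r‖^2+‖u₂ r‖^2)
        + m * Cd r + l r * Dd r := by
      simpa [hFdef, hCddef, hDddef] using
        dirac_key_identity m (l r) (u₁ r) (u₂ r) (deriv u₁ r) (deriv u₂ r)
    have hDr : D r = ‖u₂ r‖^2 - ‖u₁ r‖^2 := by
      simp [hDdef, Complex.mul_conj, ← Complex.normSq_eq_norm_sq]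
    have hDabs : |D r| ≤ ‖u₁ r‖^2 + ‖u₂ r‖^2 := by
      rw [hDr]
      have := abs_sub (‖u₂ r‖^2) (‖u₁ r‖^2)
      calc |‖u₂ r‖^2 - ‖u₁ r‖^2| ≤ |‖u₂ r‖^2| + |‖u₁ r‖^2| := abs_sub _ _
        _ = ‖u₁ r‖^2 + ‖u₂ r‖^2 := by
          rw [abs_of_nonneg (sq_nonneg _), abs_of_nonneg (sq_nonneg _)]; ring
    have h1 : deriv l r * D r ≤ |deriv l r| * (‖u₁ r‖^2 + ‖u₂ r‖^2) := by
      calc deriv l r * D r ≤ |deriv l r * D r| := le_abs_self _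
        _ = |deriv l r| * |D r| := abs_mul _ _
        _ ≤ |deriv l r| * (‖u₁ r‖^2 + ‖u₂ r‖^2) :=
            mul_le_mul_of_nonneg_left hDabs (abs_nonneg _)
    have hgdr : gd r = deriv l r * D r + l r * Dd r := rfl
    rw [hGdef]
    simp only
    rw [hFr, hgdr]
    nlinarith [sq_nonneg ‖deriv u₁ r‖, sq_nonneg ‖deriv u₂ r‖,
      mul_nonneg (mul_nonneg hm hm) (add_nonneg (sq_nonneg ‖u₁ r‖) (sq_nonneg ‖u₂ r‖))]
  -- put it together
  have hmCd : IntegrableOn (fun r => m * Cd r) (Ioi 0) volume := hCdint.const_mul m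
  have hFm : IntegrableOn (fun r => F r - m * Cd r) (Ioi 0) volume := hFint.sub hmCd
  have hmix : IntegrableOn (fun r => F r - m * Cd r - gd r) (Ioi 0) volume :=
    hFm.sub hgdint
  calc ∫ r in Ioi (0:ℝ), G r
      ≤ ∫ r in Ioi (0:ℝ), (F r - m * Cd r - gd r) :=
        setIntegral_mono_on hGint hmix measurableSet_Ioi hpt
    _ = (∫ r in Ioi (0:ℝ), F r) - m * (∫ r in Ioi (0:ℝ), Cd r)
          - ∫ r in Ioi (0:ℝ), gd r := by
        rw [integral_sub hFm hgdint, integral_sub hFint hmCd, integral_const_mul m]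
    _ = ∫ r in Ioi (0:ℝ), F r := by rw [hCint0, hgint0]; ring
end
end

section
/- Let m ≥ 0, λ ∈ ℝ, Q ≥ 0, let q : (0, ∞) → ℝ be measurable with |q(r)| ≤ Q for all r, and let l : (0, ∞) → ℝ be continuously differentiable with l(r)² − |l'(r)| ≥ (Q + |λ| + 1)² for all r ∈ (0, ∞). Then for every continuously differentiable u : ℝ → ℂ² with compact support contained in (0, ∞), ( ∫_0^∞ ‖−iσ₂·u'(r) + m·σ₃·u(r) + q(r)·u(r) + l(r)·σ₁·u(r) − λ·u(r)‖² dr )^{1/2} ≥ ( ∫_0^∞ ‖u(r)‖² dr )^{1/2}. In particular the perturbed Dirac expression τ − λ is bounded below by 1 on such functions, so no approximate eigenfunctions supported near 0 exist for spectral parameters λ with |λ| ≤ Q-compatible bounds. -/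
noncomputable section
open MeasureTheory Set Filter

/-- Pointwise Minkowski/Cauchy–Schwarz in `ℂ²`. -/
lemma pt_tri (x y x' y' : ℂ) :
    ‖x + x'‖ ^ 2 + ‖y + y'‖ ^ 2 ≤ (‖x‖ ^ 2 + ‖y‖ ^ 2) + (‖x'‖ ^ 2 + ‖y'‖ ^ 2)
      + 2 * (Real.sqrt (‖x‖ ^ 2 + ‖y‖ ^ 2) * Real.sqrt (‖x'‖ ^ 2 + ‖y'‖ ^ 2)) := by
  have hx := norm_add_le x x'
  have hy := norm_add_le y y'
  set s := Real.sqrt (‖x‖ ^ 2 + ‖y‖ ^ 2) with hs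
  set t := Real.sqrt (‖x'‖ ^ 2 + ‖y'‖ ^ 2) with ht
  have hs2 : s ^ 2 = ‖x‖ ^ 2 + ‖y‖ ^ 2 := Real.sq_sqrt (by positivity)
  have ht2 : t ^ 2 = ‖x'‖ ^ 2 + ‖y'‖ ^ 2 := Real.sq_sqrt (by positivity)
  have hu0 : 0 ≤ ‖x‖ * ‖x'‖ + ‖y‖ * ‖y'‖ := by positivity
  have hst0 : (0:ℝ) ≤ s * t := by
    have := Real.sqrt_nonneg (‖x‖ ^ 2 + ‖y‖ ^ 2)
    have := Real.sqrt_nonneg (‖x'‖ ^ 2 + ‖y'‖ ^ 2)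
    positivity
  have hsq : (‖x‖ * ‖x'‖ + ‖y‖ * ‖y'‖) ^ 2 ≤ (s * t) ^ 2 := by
    have h := sq_nonneg (‖x‖ * ‖y'‖ - ‖y‖ * ‖x'‖)
    nlinarith [hs2, ht2]
  have hst : ‖x‖ * ‖x'‖ + ‖y‖ * ‖y'‖ ≤ s * t := by
    calc ‖x‖ * ‖x'‖ + ‖y‖ * ‖y'‖ = Real.sqrt ((‖x‖ * ‖x'‖ + ‖y‖ * ‖y'‖) ^ 2) :=
          (Real.sqrt_sq hu0).symm
      _ ≤ Real.sqrt ((s * t) ^ 2) := Real.sqrt_le_sqrt hsq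
      _ = s * t := Real.sqrt_sq hst0
  rw [← hs2, ← ht2]
  nlinarith [norm_nonneg (x + x'), norm_nonneg (y + y'), norm_nonneg x, norm_nonneg x',
    norm_nonneg y, norm_nonneg y', hx, hy]

/-- Cauchy–Schwarz inequality for integrals of nonnegative functions. -/
lemma integral_CS {μ : Measure ℝ} {f g : ℝ → ℝ}
    (hfm : AEStronglyMeasurable f μ) (hgm : AEStronglyMeasurable g μ)
    (hf0 : ∀ r, 0 ≤ f r) (hg0 : ∀ r, 0 ≤ g r)
    (hf2 : Integrable (fun r => f r ^ 2) μ) (hg2 : Integrable (fun r => g r ^ 2) μ) :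
    ∫ r, f r * g r ∂μ ≤ Real.sqrt (∫ r, f r ^ 2 ∂μ) * Real.sqrt (∫ r, g r ^ 2 ∂μ) := by
  have hpq : Real.HolderConjugate 2 2 := Real.HolderConjugate.two_two
  have h2 : ENNReal.ofReal (2:ℝ) = 2 := by
    norm_num
  have hfL : MemLp f (ENNReal.ofReal 2) μ := by
    rw [h2]; exact (memLp_two_iff_integrable_sq hfm).2 hf2
  have hgL : MemLp g (ENNReal.ofReal 2) μ := by
    rw [h2]; exact (memLp_two_iff_integrable_sq hgm).2 hg2
  have h := MeasureTheory.integral_mul_le_Lp_mul_Lq_of_nonneg hpq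
    (Eventually.of_forall hf0) (Eventually.of_forall hg0) hfL hgL
  have e : ∀ (φ : ℝ → ℝ), (∫ r, φ r ^ (2:ℝ) ∂μ) ^ (1/(2:ℝ)) = Real.sqrt (∫ r, φ r ^ 2 ∂μ) := by
    intro φ
    rw [Real.sqrt_eq_rpow]
    congr 1
    refine integral_congr_ae (Eventually.of_forall fun r => ?_)
    show φ r ^ (2:ℝ) = φ r ^ (2:ℕ)
    rw [← Real.rpow_natCast (φ r) 2]; norm_num
  calc ∫ r, f r * g r ∂μ ≤ (∫ r, f r ^ (2:ℝ) ∂μ) ^ (1/(2:ℝ)) * (∫ r, g r ^ (2:ℝ) ∂μ) ^ (1/(2:ℝ)) := h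
    _ = _ := by rw [e f, e g]

/-- Integrability of a bounded a.e.-measurable function vanishing outside a compact set. -/
lemma int_helper {K : Set ℝ} (hKc : IsCompact K) {φ : ℝ → ℝ}
    (hm : AEStronglyMeasurable φ (volume.restrict (Ioi 0)))
    (h0 : ∀ r, r ∉ K → φ r = 0) {C : ℝ} (hbd : ∀ r ∈ K, |φ r| ≤ C) :
    IntegrableOn φ (Ioi 0) := by
  have hKm : MeasurableSet K := hKc.measurableSet
  have hind : Integrable (K.indicator fun _ => max C 0) (volume.restrict (Ioi 0)) := by
    rw [integrable_indicator_iff hKm]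
    refine integrableOn_const (ne_of_lt ?_)
    calc (volume.restrict (Ioi 0)) K = volume (K ∩ Ioi 0) := Measure.restrict_apply hKm
      _ ≤ volume K := measure_mono inter_subset_left
      _ < ⊤ := hKc.measure_lt_top
  refine Integrable.mono' hind hm (Eventually.of_forall fun r => ?_)
  by_cases hr : r ∈ K
  · rw [indicator_of_mem hr, Real.norm_eq_abs]
    exact (hbd r hr).trans (le_max_left _ _)
  · rw [indicator_of_notMem hr, Real.norm_eq_abs, h0 r hr, abs_zero]

set_option maxHeartbeats 1000000 in
/-- **No approximate eigenfunctions near the singular endpoint `0`.**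
If `|q| ≤ Q` and the perturbation `l` satisfies `l² − |l'| ≥ (Q + |λ| + 1)²` on
`(0, ∞)`, then for all smooth `u` compactly supported in `(0, ∞)`,
`‖(τ − λ)u‖_{L²} ≥ ‖u‖_{L²}`, where `τu = −iσ₂u' + mσ₃u + qu + lσ₁u`
(componentwise `(τu)₁ = u₂' + m·u₁ + q·u₁ + l·u₂`,
`(τu)₂ = −u₁' − m·u₂ + q·u₂ + l·u₁`). -/
theorem dirac_no_spectrum_near_zero
    (m lam Q : ℝ) (hm : 0 ≤ m) (hQ : 0 ≤ Q)
    (q : ℝ → ℝ) (hqm : Measurable q) (hq : ∀ r : ℝ, r ∈ Set.Ioi (0:ℝ) → |q r| ≤ Q)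
    (l : ℝ → ℝ) (hl : ContDiffOn ℝ 1 l (Set.Ioi 0))
    (hlbd : ∀ r ∈ Set.Ioi (0:ℝ), (Q + |lam| + 1) ^ 2 ≤ (l r) ^ 2 - |deriv l r|)
    (u₁ u₂ : ℝ → ℂ) (hu₁ : ContDiff ℝ 1 u₁) (hu₂ : ContDiff ℝ 1 u₂)
    (hc₁ : HasCompactSupport u₁) (hc₂ : HasCompactSupport u₂)
    (hs₁ : tsupport u₁ ⊆ Set.Ioi 0) (hs₂ : tsupport u₂ ⊆ Set.Ioi 0) :
    Real.sqrt (∫ r in Set.Ioi (0:ℝ), (‖u₁ r‖ ^ 2 + ‖u₂ r‖ ^ 2))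
      ≤ Real.sqrt (∫ r in Set.Ioi (0:ℝ),
          (‖deriv u₂ r + (m : ℂ) * u₁ r + (q r : ℂ) * u₁ r + (l r : ℂ) * u₂ r -
              (lam : ℂ) * u₁ r‖ ^ 2 +
           ‖-(deriv u₁ r) - (m : ℂ) * u₂ r + (q r : ℂ) * u₂ r + (l r : ℂ) * u₁ r -
              (lam : ℂ) * u₂ r‖ ^ 2)) := by
  -- basic smoothness facts
  have hcu₁ : Continuous u₁ := hu₁.continuous
  have hcu₂ : Continuous u₂ := hu₂.continuous
  have hcd₁ : Continuous (deriv u₁) := hu₁.continuous_deriv le_rfl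
  have hcd₂ : Continuous (deriv u₂) := hu₂.continuous_deriv le_rfl
  have hdiff₁ : ∀ r, HasDerivAt u₁ (deriv u₁ r) r :=
    fun r => ((hu₁.differentiable one_ne_zero) r).hasDerivAt
  have hdiff₂ : ∀ r, HasDerivAt u₂ (deriv u₂ r) r :=
    fun r => ((hu₂.differentiable one_ne_zero) r).hasDerivAt
  -- the compact set containing everything
  set K : Set ℝ := tsupport u₁ ∪ tsupport u₂ with hKdef
  have hKc : IsCompact K := hc₁.union hc₂
  have hKsub : K ⊆ Ioi 0 := union_subset hs₁ hs₂
  have hz : ∀ r, r ∉ K → u₁ r = 0 ∧ u₂ r = 0 ∧ deriv u₁ r = 0 ∧ deriv u₂ r = 0 := by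
    intro r hr
    have h1 : r ∉ tsupport u₁ := fun h => hr (Or.inl h)
    have h2 : r ∉ tsupport u₂ := fun h => hr (Or.inr h)
    refine ⟨image_eq_zero_of_notMem_tsupport h1, image_eq_zero_of_notMem_tsupport h2, ?_, ?_⟩
    · by_contra h
      exact h1 (support_deriv_subset (show r ∈ Function.support (deriv u₁) from h))
    · by_contra h
      exact h2 (support_deriv_subset (show r ∈ Function.support (deriv u₂) from h))
  -- a surrounding interval
  obtain ⟨a, b, ha, hab, hKab⟩ : ∃ a b : ℝ, 0 < a ∧ a ≤ b ∧ K ⊆ Icc a b := by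
    rcases K.eq_empty_or_nonempty with h | h
    · exact ⟨1, 1, one_pos, le_rfl, by simp [h]⟩
    · exact ⟨sInf K, sSup K, hKsub (hKc.sInf_mem h),
        Real.sInf_le_sSup _ hKc.bddBelow hKc.bddAbove,
        fun r hr => ⟨csInf_le hKc.bddBelow hr, le_csSup hKc.bddAbove hr⟩⟩
  set A : ℝ := a / 2 with hAdef
  set B : ℝ := b + 1 with hBdef
  have hA0 : 0 < A := by positivity
  have hAB : A ≤ B := by simp only [hAdef, hBdef]; linarith
  have hIccIoi : Icc A B ⊆ Ioi 0 := fun r hr => lt_of_lt_of_le hA0 hr.1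
  have hAK : A ∉ K := fun h => by have := (hKab h).1; simp only [hAdef] at this; linarith
  have hBK : B ∉ K := fun h => by have := (hKab h).2; simp only [hBdef] at this; linarith
  have hKAB : K ⊆ Ioc A B := fun r hr =>
    ⟨lt_of_lt_of_le (by simp only [hAdef]; linarith) (hKab hr).1,
     le_trans (hKab hr).2 (by simp only [hBdef]; linarith)⟩
  -- facts about l
  have hlc : ContinuousOn l (Ioi 0) := hl.continuousOn
  have hl'c : ContinuousOn (deriv l) (Ioi 0) := by
    exact hl.continuousOn_deriv_of_isOpen isOpen_Ioi le_rfl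
  have hlder : ∀ r ∈ Ioi (0:ℝ), HasDerivAt l (deriv l r) r := fun r hr =>
    ((hl.differentiableOn one_ne_zero).differentiableAt (isOpen_Ioi.mem_nhds hr)).hasDerivAt
  -- abbreviations
  set c : ℝ := Q + |lam| with hcdef
  have hc0 : 0 ≤ c := by positivity
  set n : ℝ → ℝ := fun r => ‖u₁ r‖ ^ 2 + ‖u₂ r‖ ^ 2 with hndef
  have hnc : Continuous n := ((hcu₁.norm.pow 2).add (hcu₂.norm.pow 2))
  have hn0 : ∀ r, 0 ≤ n r := fun r => by positivity
  have hnK : ∀ r, r ∉ K → n r = 0 := by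
    intro r hr; obtain ⟨e1, e2, _, _⟩ := hz r hr; simp [hndef, e1, e2]
  -- generic integrability
  have key : ∀ φ : ℝ → ℝ, ContinuousOn φ (Ioi 0) → (∀ r, r ∉ K → φ r = 0) →
      IntegrableOn φ (Ioi 0) := by
    intro φ hφ h0
    obtain ⟨C, hC⟩ := hKc.exists_bound_of_continuousOn (hφ.mono hKsub)
    exact int_helper hKc (hφ.aestronglyMeasurable measurableSet_Ioi) h0
      (fun r hr => by simpa using hC r hr)
  have hnint : IntegrableOn n (Ioi 0) := key n hnc.continuousOn hnK
  -- g and its derivative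
  set g : ℝ → ℝ := fun r => ‖u₂ r‖ ^ 2 - ‖u₁ r‖ ^ 2 with hgdef
  set g' : ℝ → ℝ := fun r => 2 * (deriv u₂ r * (starRingEnd ℂ) (u₂ r)).re
      - 2 * (deriv u₁ r * (starRingEnd ℂ) (u₁ r)).re with hg'def
  have hgc : Continuous g := ((hcu₂.norm.pow 2).sub (hcu₁.norm.pow 2))
  have hg'c : Continuous g' := by
    apply Continuous.sub
    · exact continuous_const.mul (Complex.continuous_re.comp (hcd₂.mul (Complex.continuous_conj.comp hcu₂)))
    · exact continuous_const.mul (Complex.continuous_re.comp (hcd₁.mul (Complex.continuous_conj.comp hcu₁)))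
  have hnormsq : ∀ z : ℂ, ‖z‖ ^ 2 = z.re ^ 2 + z.im ^ 2 := by
    intro z
    rw [Complex.sq_norm, Complex.normSq_apply]; ring
  have hsqder : ∀ (u : ℝ → ℂ), (∀ r, HasDerivAt u (deriv u r) r) → ∀ r,
      HasDerivAt (fun r => ‖u r‖ ^ 2) (2 * (deriv u r * (starRingEnd ℂ) (u r)).re) r := by
    intro u hu r
    have hre : HasDerivAt (fun r => (u r).re) ((deriv u r).re) r :=
      (Complex.reCLM.hasFDerivAt).comp_hasDerivAt r (hu r)
    have him : HasDerivAt (fun r => (u r).im) ((deriv u r).im) r :=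
      (Complex.imCLM.hasFDerivAt).comp_hasDerivAt r (hu r)
    have h : HasDerivAt (fun r => (u r).re * (u r).re + (u r).im * (u r).im) _ r :=
      ((hre.mul hre).add (him.mul him))
    have heq : (fun r => (u r).re * (u r).re + (u r).im * (u r).im) = fun r => ‖u r‖ ^ 2 := by
      funext r; rw [hnormsq]; ring
    rw [heq] at h
    convert h using 1
    simp [Complex.mul_re, Complex.conj_re, Complex.conj_im]
    ring
  have hgder : ∀ r, HasDerivAt g (g' r) r := fun r =>
    (hsqder u₂ hdiff₂ r).sub (hsqder u₁ hdiff₁ r)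
  have hgK : ∀ r, r ∉ K → g r = 0 := by
    intro r hr; obtain ⟨e1, e2, _, _⟩ := hz r hr; simp [hgdef, e1, e2]
  have hg'K : ∀ r, r ∉ K → g' r = 0 := by
    intro r hr; obtain ⟨e1, e2, e3, e4⟩ := hz r hr; simp [hg'def, e1, e2, e3, e4]
  -- the unperturbed operator
  set A₀ : ℝ → ℂ := fun r => deriv u₂ r + (m : ℂ) * u₁ r + (l r : ℂ) * u₂ r with hA₀def
  set B₀ : ℝ → ℂ := fun r => -deriv u₁ r - (m : ℂ) * u₂ r + (l r : ℂ) * u₁ r with hB₀def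
  set TA : ℝ → ℝ := fun r => ‖A₀ r‖ ^ 2 + ‖B₀ r‖ ^ 2 with hTAdef
  have hlC : ContinuousOn (fun r => ((l r : ℂ))) (Ioi 0) :=
    Complex.continuous_ofReal.comp_continuousOn hlc
  have hA₀c : ContinuousOn A₀ (Ioi 0) :=
    ((hcd₂.continuousOn.add (continuous_const.mul hcu₁).continuousOn).add (hlC.mul hcu₂.continuousOn))
  have hB₀c : ContinuousOn B₀ (Ioi 0) :=
    ((hcd₁.neg.continuousOn.sub (continuous_const.mul hcu₂).continuousOn).add (hlC.mul hcu₁.continuousOn))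
  have hTAc : ContinuousOn TA (Ioi 0) := ((hA₀c.norm.pow 2).add (hB₀c.norm.pow 2))
  have hTAK : ∀ r, r ∉ K → TA r = 0 := by
    intro r hr; obtain ⟨e1, e2, e3, e4⟩ := hz r hr
    simp [hTAdef, hA₀def, hB₀def, e1, e2, e3, e4]
  have hTAint : IntegrableOn TA (Ioi 0) := key TA hTAc hTAK
  have hTA0 : ∀ r, 0 ≤ TA r := fun r => by simp only [hTAdef]; positivity
  -- the pointwise expansion
  have hexp : ∀ r, TA r = ‖deriv u₂ r + (m : ℂ) * u₁ r‖ ^ 2 + ‖deriv u₁ r + (m : ℂ) * u₂ r‖ ^ 2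
      + ((l r) ^ 2 * n r + l r * g' r) := by
    intro r
    simp only [hTAdef, hA₀def, hB₀def, hndef, hg'def, hnormsq]
    simp only [Complex.add_re, Complex.add_im, Complex.sub_re, Complex.sub_im, Complex.neg_re,
      Complex.neg_im, Complex.mul_re, Complex.mul_im, Complex.ofReal_re, Complex.ofReal_im,
      Complex.conj_re, Complex.conj_im]
    ring
  -- integrability of the various pieces
  have hl2n : IntegrableOn (fun r => (l r) ^ 2 * n r) (Ioi 0) :=
    key _ ((hlc.pow 2).mul hnc.continuousOn) (fun r hr => by simp [hnK r hr])
  have hlg' : IntegrableOn (fun r => l r * g' r) (Ioi 0) :=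
    key _ (hlc.mul hg'c.continuousOn) (fun r hr => by simp [hg'K r hr])
  have hl'g : IntegrableOn (fun r => deriv l r * g r) (Ioi 0) :=
    key _ (hl'c.mul hgc.continuousOn) (fun r hr => by simp [hgK r hr])
  have habsn : IntegrableOn (fun r => |deriv l r| * n r) (Ioi 0) :=
    key _ (hl'c.abs.mul hnc.continuousOn) (fun r hr => by simp [hnK r hr])
  -- integration by parts
  have hIBP : ∫ r in Ioi (0:ℝ), l r * g' r = - ∫ r in Ioi (0:ℝ), deriv l r * g r := by
    have hsupp1 : Function.support (fun r => l r * g' r) ⊆ Ioc A B := by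
      intro r hr
      refine hKAB ?_
      by_contra h
      exact hr (by simp [hg'K r h])
    have hsupp2 : Function.support (fun r => deriv l r * g r) ⊆ Ioc A B := by
      intro r hr
      refine hKAB ?_
      by_contra h
      exact hr (by simp [hgK r h])
    have e1 : ∫ r in Ioi (0:ℝ), l r * g' r = ∫ x in A..B, l x * g' x := by
      rw [setIntegral_eq_integral_of_forall_compl_eq_zero
          (fun r hr => by rw [hg'K r (fun h => hr (hKsub h)), mul_zero]),
        ← intervalIntegral.integral_eq_integral_of_support_subset hsupp1]
    have e2 : ∫ r in Ioi (0:ℝ), deriv l r * g r = ∫ x in A..B, deriv l x * g x := by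
      rw [setIntegral_eq_integral_of_forall_compl_eq_zero
          (fun r hr => by rw [hgK r (fun h => hr (hKsub h)), mul_zero]),
        ← intervalIntegral.integral_eq_integral_of_support_subset hsupp2]
    rw [e1, e2]
    have huIcc : uIcc A B = Icc A B := uIcc_of_le hAB
    have hIBP' := intervalIntegral.integral_mul_deriv_eq_deriv_mul
      (u := l) (v := g) (u' := deriv l) (v' := g')
      (fun x hx => hlder x (hIccIoi (huIcc ▸ hx)))
      (fun x hx => hgder x)
      (((hl'c.mono (huIcc ▸ hIccIoi : uIcc A B ⊆ Ioi 0))).intervalIntegrable)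
      (hg'c.intervalIntegrable A B)
    rw [hIBP', hgK A hAK, hgK B hBK]
    ring
  -- lower bound on the quadratic form
  have hT : (c + 1) ^ 2 * ∫ r in Ioi (0:ℝ), n r ≤ ∫ r in Ioi (0:ℝ), TA r := by
    have step1 : (c + 1) ^ 2 * ∫ r in Ioi (0:ℝ), n r
        = ∫ r in Ioi (0:ℝ), (c + 1) ^ 2 * n r := (integral_const_mul _ _).symm
    have step2 : ∫ r in Ioi (0:ℝ), (c + 1) ^ 2 * n r
        ≤ ∫ r in Ioi (0:ℝ), ((l r) ^ 2 * n r - |deriv l r| * n r) := by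
      refine setIntegral_mono_on (hnint.const_mul _) (hl2n.sub habsn) measurableSet_Ioi ?_
      intro r hr
      have h := hlbd r hr
      have : (c + 1) ^ 2 * n r ≤ ((l r) ^ 2 - |deriv l r|) * n r :=
        mul_le_mul_of_nonneg_right (by rw [hcdef]; exact h) (hn0 r)
      linarith [this]
    have step3 : ∫ r in Ioi (0:ℝ), ((l r) ^ 2 * n r - |deriv l r| * n r)
        = (∫ r in Ioi (0:ℝ), (l r) ^ 2 * n r) - ∫ r in Ioi (0:ℝ), |deriv l r| * n r :=
      integral_sub hl2n habsn
    have step4 : ∫ r in Ioi (0:ℝ), deriv l r * g r ≤ ∫ r in Ioi (0:ℝ), |deriv l r| * n r := by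
      refine setIntegral_mono_on hl'g habsn measurableSet_Ioi ?_
      intro r _
      have h1 : deriv l r * g r ≤ |deriv l r * g r| := le_abs_self _
      have h2 : |deriv l r * g r| = |deriv l r| * |g r| := abs_mul _ _
      have h3 : |g r| ≤ n r := by
        rw [abs_le]
        constructor
        · simp only [hgdef, hndef]; nlinarith [sq_nonneg ‖u₂ r‖]
        · simp only [hgdef, hndef]; nlinarith [sq_nonneg ‖u₁ r‖]
      calc deriv l r * g r ≤ |deriv l r| * |g r| := by rw [← h2]; exact h1
        _ ≤ |deriv l r| * n r := mul_le_mul_of_nonneg_left h3 (abs_nonneg _)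
    have step5 : ∫ r in Ioi (0:ℝ), ((l r) ^ 2 * n r + l r * g' r)
        = (∫ r in Ioi (0:ℝ), (l r) ^ 2 * n r) + ∫ r in Ioi (0:ℝ), l r * g' r :=
      integral_add hl2n hlg'
    have step6 : ∫ r in Ioi (0:ℝ), ((l r) ^ 2 * n r + l r * g' r) ≤ ∫ r in Ioi (0:ℝ), TA r := by
      refine setIntegral_mono_on (hl2n.add hlg') hTAint measurableSet_Ioi ?_
      intro r _
      have h := hexp r
      have h1 : (0:ℝ) ≤ ‖deriv u₂ r + (m : ℂ) * u₁ r‖ ^ 2 := by positivity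
      have h2 : (0:ℝ) ≤ ‖deriv u₁ r + (m : ℂ) * u₂ r‖ ^ 2 := by positivity
      linarith
    linarith [step1, step2, step3, step4, step5, step6, hIBP]
  -- the perturbation term
  set G2 : ℝ → ℝ := fun r => (q r - lam) ^ 2 * n r with hG2def
  have hG20 : ∀ r, 0 ≤ G2 r := fun r => by simp only [hG2def]; positivity
  have hG2m : AEStronglyMeasurable G2 (volume.restrict (Ioi 0)) :=
    (((hqm.sub measurable_const).pow_const 2).mul hnc.measurable).aestronglyMeasurable
  have hG2int : IntegrableOn G2 (Ioi 0) := by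
    obtain ⟨Cn, hCn⟩ := hKc.exists_bound_of_continuousOn hnc.continuousOn
    refine int_helper hKc hG2m (fun r hr => by simp [hG2def, hnK r hr]) (C := c ^ 2 * Cn) ?_
    intro r hr
    have hqr : |q r - lam| ≤ c := by
      have := hq r (hKsub hr)
      have h2 : |q r - lam| ≤ |q r| + |lam| := by
        calc |q r - lam| = |q r + (-lam)| := by ring_nf
          _ ≤ |q r| + |(-lam)| := abs_add_le _ _
          _ = |q r| + |lam| := by rw [abs_neg]
      simp only [hcdef]; linarith
    have hsq : (q r - lam) ^ 2 ≤ c ^ 2 := by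
      rw [← sq_abs]; exact pow_le_pow_left₀ (abs_nonneg _) hqr 2
    have hCnr : n r ≤ Cn := by simpa [Real.norm_eq_abs, abs_of_nonneg (hn0 r)] using hCn r hr
    rw [abs_of_nonneg (hG20 r)]
    simp only [hG2def]
    calc (q r - lam) ^ 2 * n r ≤ c ^ 2 * n r := mul_le_mul_of_nonneg_right hsq (hn0 r)
      _ ≤ c ^ 2 * Cn := mul_le_mul_of_nonneg_left hCnr (by positivity)
  have hG2le : ∫ r in Ioi (0:ℝ), G2 r ≤ c ^ 2 * ∫ r in Ioi (0:ℝ), n r := by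
    rw [← integral_const_mul]
    refine setIntegral_mono_on hG2int (hnint.const_mul _) measurableSet_Ioi ?_
    intro r hr
    have hqr : |q r - lam| ≤ c := by
      have := hq r hr
      have h2 : |q r - lam| ≤ |q r| + |lam| := by
        calc |q r - lam| = |q r + (-lam)| := by ring_nf
          _ ≤ |q r| + |(-lam)| := abs_add_le _ _
          _ = |q r| + |lam| := by rw [abs_neg]
      simp only [hcdef]; linarith
    have hsq : (q r - lam) ^ 2 ≤ c ^ 2 := by
      rw [← sq_abs]; exact pow_le_pow_left₀ (abs_nonneg _) hqr 2
    exact mul_le_mul_of_nonneg_right hsq (hn0 r)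
  -- the full (target) integrand
  set SA : ℝ → ℝ := fun r =>
      ‖deriv u₂ r + (m : ℂ) * u₁ r + (q r : ℂ) * u₁ r + (l r : ℂ) * u₂ r - (lam : ℂ) * u₁ r‖ ^ 2 +
      ‖-(deriv u₁ r) - (m : ℂ) * u₂ r + (q r : ℂ) * u₂ r + (l r : ℂ) * u₁ r - (lam : ℂ) * u₂ r‖ ^ 2
    with hSAdef
  have hSA0 : ∀ r, 0 ≤ SA r := fun r => by simp only [hSAdef]; positivity
  have hSAeq : ∀ r, SA r = ‖A₀ r + ((q r : ℂ) - (lam : ℂ)) * u₁ r‖ ^ 2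
      + ‖B₀ r + ((q r : ℂ) - (lam : ℂ)) * u₂ r‖ ^ 2 := by
    intro r
    simp only [hSAdef, hA₀def, hB₀def]
    have e1 : deriv u₂ r + (m : ℂ) * u₁ r + (q r : ℂ) * u₁ r + (l r : ℂ) * u₂ r - (lam : ℂ) * u₁ r
        = (deriv u₂ r + (m : ℂ) * u₁ r + (l r : ℂ) * u₂ r) + ((q r : ℂ) - (lam : ℂ)) * u₁ r := by
      ring
    have e2 : -(deriv u₁ r) - (m : ℂ) * u₂ r + (q r : ℂ) * u₂ r + (l r : ℂ) * u₁ r - (lam : ℂ) * u₂ r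
        = (-deriv u₁ r - (m : ℂ) * u₂ r + (l r : ℂ) * u₁ r) + ((q r : ℂ) - (lam : ℂ)) * u₂ r := by
      ring
    rw [e1, e2]
  have hw1 : ∀ r, ‖((q r : ℂ) - (lam : ℂ)) * u₁ r‖ ^ 2 = (q r - lam) ^ 2 * ‖u₁ r‖ ^ 2 := by
    intro r
    rw [norm_mul, mul_pow, ← Complex.ofReal_sub, Complex.norm_real, Real.norm_eq_abs, sq_abs]
  have hw2 : ∀ r, ‖((q r : ℂ) - (lam : ℂ)) * u₂ r‖ ^ 2 = (q r - lam) ^ 2 * ‖u₂ r‖ ^ 2 := by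
    intro r
    rw [norm_mul, mul_pow, ← Complex.ofReal_sub, Complex.norm_real, Real.norm_eq_abs, sq_abs]
  have hwsum : ∀ r, ‖((q r : ℂ) - (lam : ℂ)) * u₁ r‖ ^ 2 + ‖((q r : ℂ) - (lam : ℂ)) * u₂ r‖ ^ 2
      = G2 r := by
    intro r; rw [hw1 r, hw2 r]; simp only [hG2def, hndef]; ring
  -- measurability of SA
  have hqC : AEStronglyMeasurable (fun r => ((q r : ℂ))) (volume.restrict (Ioi 0)) :=
    (Complex.measurable_ofReal.comp hqm).aestronglyMeasurable
  have hlCm : AEStronglyMeasurable (fun r => ((l r : ℂ))) (volume.restrict (Ioi 0)) :=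
    hlC.aestronglyMeasurable measurableSet_Ioi
  have hSAm : AEStronglyMeasurable SA (volume.restrict (Ioi 0)) := by
    apply AEStronglyMeasurable.add
    · apply AEStronglyMeasurable.pow
      apply AEStronglyMeasurable.norm
      exact ((((hcd₂.aestronglyMeasurable.add
        (continuous_const.mul hcu₁).aestronglyMeasurable).add
        (hqC.mul hcu₁.aestronglyMeasurable)).add
        (hlCm.mul hcu₂.aestronglyMeasurable)).sub
        (continuous_const.mul hcu₁).aestronglyMeasurable)
    · apply AEStronglyMeasurable.pow
      apply AEStronglyMeasurable.norm
      exact ((((hcd₁.neg.aestronglyMeasurable.sub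
        (continuous_const.mul hcu₂).aestronglyMeasurable).add
        (hqC.mul hcu₂.aestronglyMeasurable)).add
        (hlCm.mul hcu₁.aestronglyMeasurable)).sub
        (continuous_const.mul hcu₂).aestronglyMeasurable)
  -- integrability of SA
  have hSAint : IntegrableOn SA (Ioi 0) := by
    refine Integrable.mono' ((hTAint.const_mul 2).add (hG2int.const_mul 2)) hSAm
      (Eventually.of_forall fun r => ?_)
    simp only [Pi.add_apply]
    rw [Real.norm_eq_abs, abs_of_nonneg (hSA0 r), hSAeq r]
    have h1 := norm_add_le (A₀ r) (((q r : ℂ) - (lam : ℂ)) * u₁ r)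
    have h2 := norm_add_le (B₀ r) (((q r : ℂ) - (lam : ℂ)) * u₂ r)
    have hws := hwsum r
    simp only [hTAdef]
    nlinarith [norm_nonneg (A₀ r), norm_nonneg (B₀ r),
      norm_nonneg (((q r : ℂ) - (lam : ℂ)) * u₁ r), norm_nonneg (((q r : ℂ) - (lam : ℂ)) * u₂ r),
      norm_nonneg (A₀ r + ((q r : ℂ) - (lam : ℂ)) * u₁ r),
      norm_nonneg (B₀ r + ((q r : ℂ) - (lam : ℂ)) * u₂ r),
      sq_nonneg (‖A₀ r‖ - ‖((q r : ℂ) - (lam : ℂ)) * u₁ r‖),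
      sq_nonneg (‖B₀ r‖ - ‖((q r : ℂ) - (lam : ℂ)) * u₂ r‖)]
  -- Minkowski : sqrt (∫ TA) ≤ sqrt (∫ SA) + sqrt (∫ G2)
  set F : ℝ → ℝ := fun r => Real.sqrt (SA r) with hFdef
  set G : ℝ → ℝ := fun r => Real.sqrt (G2 r) with hGdef
  have hF2 : ∀ r, F r ^ 2 = SA r := fun r => Real.sq_sqrt (hSA0 r)
  have hG2sq : ∀ r, G r ^ 2 = G2 r := fun r => Real.sq_sqrt (hG20 r)
  have hFm : AEStronglyMeasurable F (volume.restrict (Ioi 0)) :=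
    Real.continuous_sqrt.comp_aestronglyMeasurable hSAm
  have hGm : AEStronglyMeasurable G (volume.restrict (Ioi 0)) :=
    Real.continuous_sqrt.comp_aestronglyMeasurable hG2m
  have hF2int : Integrable (fun r => F r ^ 2) (volume.restrict (Ioi 0)) := by
    simp only [hF2]; exact hSAint
  have hG2int' : Integrable (fun r => G r ^ 2) (volume.restrict (Ioi 0)) := by
    simp only [hG2sq]; exact hG2int
  have hFGint : Integrable (fun r => F r * G r) (volume.restrict (Ioi 0)) := by
    refine Integrable.mono' ((hSAint.const_mul (1/2 : ℝ)).add (hG2int.const_mul (1/2 : ℝ)))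
      (hFm.mul hGm) (Eventually.of_forall fun r => ?_)
    simp only [Pi.add_apply]
    have hF0 : 0 ≤ F r := Real.sqrt_nonneg _
    have hG0 : 0 ≤ G r := Real.sqrt_nonneg _
    rw [Real.norm_eq_abs, abs_of_nonneg (mul_nonneg hF0 hG0)]
    calc F r * G r ≤ (F r ^ 2 + G r ^ 2) / 2 := by nlinarith [sq_nonneg (F r - G r)]
      _ = 1/2 * SA r + 1/2 * G2 r := by rw [hF2 r, hG2sq r]; ring
  have hptw : ∀ r, TA r ≤ SA r + G2 r + 2 * (F r * G r) := by
    intro r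
    have h := pt_tri (A₀ r + ((q r : ℂ) - (lam : ℂ)) * u₁ r) (B₀ r + ((q r : ℂ) - (lam : ℂ)) * u₂ r)
      (-(((q r : ℂ) - (lam : ℂ)) * u₁ r)) (-(((q r : ℂ) - (lam : ℂ)) * u₂ r))
    simp only [add_neg_cancel_right, norm_neg] at h
    rw [← hSAeq r, hwsum r] at h
    simp only [hTAdef, hFdef, hGdef]
    convert h using 3 <;> simp [hSAeq r, hwsum r]
  have hMink : Real.sqrt (∫ r in Ioi (0:ℝ), TA r)
      ≤ Real.sqrt (∫ r in Ioi (0:ℝ), SA r) + Real.sqrt (∫ r in Ioi (0:ℝ), G2 r) := by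
    have hCS : ∫ r in Ioi (0:ℝ), F r * G r
        ≤ Real.sqrt (∫ r in Ioi (0:ℝ), F r ^ 2) * Real.sqrt (∫ r in Ioi (0:ℝ), G r ^ 2) :=
      integral_CS hFm hGm (fun r => Real.sqrt_nonneg _) (fun r => Real.sqrt_nonneg _) hF2int hG2int'
    have eF : (∫ r in Ioi (0:ℝ), F r ^ 2) = ∫ r in Ioi (0:ℝ), SA r := by
      refine integral_congr_ae (Eventually.of_forall fun r => hF2 r)
    have eG : (∫ r in Ioi (0:ℝ), G r ^ 2) = ∫ r in Ioi (0:ℝ), G2 r := by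
      refine integral_congr_ae (Eventually.of_forall fun r => hG2sq r)
    rw [eF, eG] at hCS
    have hint : ∫ r in Ioi (0:ℝ), TA r
        ≤ (∫ r in Ioi (0:ℝ), SA r) + (∫ r in Ioi (0:ℝ), G2 r)
          + 2 * ∫ r in Ioi (0:ℝ), F r * G r := by
      have hrhs : Integrable (fun r => SA r + G2 r + 2 * (F r * G r)) (volume.restrict (Ioi 0)) :=
        (hSAint.add hG2int).add (hFGint.const_mul 2)
      have hadd1 : Integrable (fun r => SA r + G2 r) (volume.restrict (Ioi 0)) :=
        hSAint.add hG2int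
      have hadd2 : Integrable (fun r => 2 * (F r * G r)) (volume.restrict (Ioi 0)) :=
        hFGint.const_mul 2
      have := setIntegral_mono_on hTAint hrhs measurableSet_Ioi (fun r _ => hptw r)
      rwa [integral_add hadd1 hadd2, integral_add hSAint hG2int, integral_const_mul] at this
    have hSAnn : 0 ≤ ∫ r in Ioi (0:ℝ), SA r := setIntegral_nonneg measurableSet_Ioi fun r _ => hSA0 r
    have hG2nn : 0 ≤ ∫ r in Ioi (0:ℝ), G2 r := setIntegral_nonneg measurableSet_Ioi fun r _ => hG20 r
    have hb : ∫ r in Ioi (0:ℝ), TA r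
        ≤ (Real.sqrt (∫ r in Ioi (0:ℝ), SA r) + Real.sqrt (∫ r in Ioi (0:ℝ), G2 r)) ^ 2 := by
      have e1 : Real.sqrt (∫ r in Ioi (0:ℝ), SA r) ^ 2 = ∫ r in Ioi (0:ℝ), SA r :=
        Real.sq_sqrt hSAnn
      have e2 : Real.sqrt (∫ r in Ioi (0:ℝ), G2 r) ^ 2 = ∫ r in Ioi (0:ℝ), G2 r :=
        Real.sq_sqrt hG2nn
      have hprod : ∫ r in Ioi (0:ℝ), F r * G r
          ≤ Real.sqrt (∫ r in Ioi (0:ℝ), SA r) * Real.sqrt (∫ r in Ioi (0:ℝ), G2 r) := hCS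
      nlinarith [hint]
    calc Real.sqrt (∫ r in Ioi (0:ℝ), TA r)
        ≤ Real.sqrt ((Real.sqrt (∫ r in Ioi (0:ℝ), SA r) + Real.sqrt (∫ r in Ioi (0:ℝ), G2 r)) ^ 2) :=
          Real.sqrt_le_sqrt hb
      _ = _ := Real.sqrt_sq (by positivity)
  -- conclusion
  have h1 : (c + 1) * Real.sqrt (∫ r in Ioi (0:ℝ), n r) ≤ Real.sqrt (∫ r in Ioi (0:ℝ), TA r) := by
    have h := Real.sqrt_le_sqrt hT
    rwa [Real.sqrt_mul (by positivity), Real.sqrt_sq (by positivity)] at h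
  have h2 : Real.sqrt (∫ r in Ioi (0:ℝ), G2 r) ≤ c * Real.sqrt (∫ r in Ioi (0:ℝ), n r) := by
    have h := Real.sqrt_le_sqrt hG2le
    rwa [Real.sqrt_mul (by positivity), Real.sqrt_sq hc0] at h
  calc Real.sqrt (∫ r in Ioi (0:ℝ), n r)
      = (c + 1) * Real.sqrt (∫ r in Ioi (0:ℝ), n r)
        - c * Real.sqrt (∫ r in Ioi (0:ℝ), n r) := by ring
    _ ≤ Real.sqrt (∫ r in Ioi (0:ℝ), SA r) := by linarith [h1, h2, hMink]
    _ = _ := rfl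
end
end
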